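/- arXiv:2207.11107 — 2 statements merged into one kernel-verified Lean document; each statement's English description precedes it below -/
import Mathlib

section
/- Let H be a real Hilbert space, α > 0, let (Wₙ) be a sequence of self-adjoint operators with Wₙ ⪰ α·Id and sup_n ‖Wₙ‖ < ∞, let C ⊆ H be nonempty, and let (xₙ) be a sequence in H such that there is a summable sequence (ηₙ) in [0,∞) and, for each z ∈ C, a summable sequence (εₙ) in [0,∞), with ‖xₙ₊₁ − z‖²_{Wₙ₊₁} ≤ (1+ηₙ)‖xₙ − z‖²_{Wₙ} + εₙ for all n. Then for each z ∈ C the sequence (‖xₙ − z‖_{Wₙ}) converges, and (xₙ) is bounded. -/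
/-!
Dividing the recursion `aₙ₊₁ ≤ (1 + ηₙ) aₙ + εₙ` by `Pₙ₊₁ = ∏_{k ≤ n} (1 + η_k)` gives
`bₙ₊₁ ≤ bₙ + εₙ` for `bₙ = aₙ / Pₙ`, so `bₙ - ∑_{k<n} ε_k` is antitone and bounded below and
`bₙ` converges. The products `Pₙ` increase and are bounded by `exp (∑ ηₙ)`, hence converge, so
`aₙ = bₙ Pₙ` converges as well. Applied to `aₙ = ‖xₙ - z‖²_{Wₙ}`, convergence bounds `aₙ`, and
`α ‖xₙ - z‖² ≤ aₙ` bounds `xₙ`.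
-/

open scoped RealInnerProductSpace Topology
open Filter Finset

theorem exists_tendsto_of_le_add_of_summable {b ε : ℕ → ℝ} (hb : BddBelow (Set.range b))
    (hε : ∀ n, 0 ≤ ε n) (hεs : Summable ε) (hrec : ∀ n, b (n + 1) ≤ b n + ε n) :
    ∃ l, Tendsto b atTop (𝓝 l) := by
  obtain ⟨m, hm⟩ := hb
  set c : ℕ → ℝ := fun n => b n - ∑ k ∈ range n, ε k
  have hc_anti : Antitone c := antitone_nat_of_succ_le fun n => by
    simp only [c, sum_range_succ]
    linarith [hrec n]
  have hc_bdd : BddBelow (Set.range c) := by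
    refine ⟨m - ∑' k, ε k, ?_⟩
    rintro _ ⟨n, rfl⟩
    linarith [hm ⟨n, rfl⟩, hεs.sum_le_tsum (range n) fun k _ => hε k]
  refine ⟨_, (tendsto_atTop_ciInf hc_anti hc_bdd).add hεs.hasSum.tendsto_sum_nat |>.congr ?_⟩
  intro n
  simp only [c, sub_add_cancel]

theorem one_le_prod_range_one_add {η : ℕ → ℝ} (hη : ∀ n, 0 ≤ η n) (n : ℕ) :
    1 ≤ ∏ k ∈ range n, (1 + η k) :=
  one_le_prod fun k _ => le_add_of_nonneg_right (hη k)

theorem prod_range_one_add_le_exp_tsum {η : ℕ → ℝ} (hη : ∀ n, 0 ≤ η n) (hηs : Summable η)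
    (n : ℕ) : ∏ k ∈ range n, (1 + η k) ≤ Real.exp (∑' k, η k) :=
  calc ∏ k ∈ range n, (1 + η k)
      ≤ ∏ k ∈ range n, Real.exp (η k) :=
        prod_le_prod (fun k _ => by linarith [hη k])
          fun k _ => by linarith [Real.add_one_le_exp (η k)]
    _ = Real.exp (∑ k ∈ range n, η k) := (Real.exp_sum _ _).symm
    _ ≤ Real.exp (∑' k, η k) := Real.exp_le_exp.2 (hηs.sum_le_tsum _ fun k _ => hη k)

theorem exists_tendsto_prod_range_one_add {η : ℕ → ℝ} (hη : ∀ n, 0 ≤ η n)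
    (hηs : Summable η) : ∃ p, Tendsto (fun n => ∏ k ∈ range n, (1 + η k)) atTop (𝓝 p) := by
  have hmono : Monotone fun n => ∏ k ∈ range n, (1 + η k) :=
    monotone_nat_of_le_succ fun n => by
      rw [prod_range_succ]
      exact le_mul_of_one_le_right (zero_le_one.trans (one_le_prod_range_one_add hη n))
        (le_add_of_nonneg_right (hη n))
  refine ⟨_, tendsto_atTop_ciSup hmono ⟨Real.exp (∑' k, η k), ?_⟩⟩
  rintro _ ⟨n, rfl⟩
  exact prod_range_one_add_le_exp_tsum hη hηs n

theorem exists_tendsto_of_le_one_add_mul_add {a η ε : ℕ → ℝ} (ha : ∀ n, 0 ≤ a n)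
    (hη : ∀ n, 0 ≤ η n) (hηs : Summable η) (hε : ∀ n, 0 ≤ ε n) (hεs : Summable ε)
    (hrec : ∀ n, a (n + 1) ≤ (1 + η n) * a n + ε n) :
    ∃ l, Tendsto a atTop (𝓝 l) := by
  set P : ℕ → ℝ := fun n => ∏ k ∈ range n, (1 + η k)
  have hP1 : ∀ n, 1 ≤ P n := one_le_prod_range_one_add hη
  have hPpos : ∀ n, 0 < P n := fun n => zero_lt_one.trans_le (hP1 n)
  have hstep : ∀ n, a (n + 1) / P (n + 1) ≤ a n / P n + ε n := fun n =>
    calc a (n + 1) / P (n + 1)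
        ≤ ((1 + η n) * a n + ε n) / P (n + 1) :=
          div_le_div_of_nonneg_right (hrec n) (hPpos _).le
      _ = a n / P n + ε n / P (n + 1) := by
          have hP : P (n + 1) = P n * (1 + η n) := prod_range_succ _ n
          have h1η : 1 + η n ≠ 0 := by linarith [hη n]
          rw [add_div, hP, mul_comm (P n), mul_div_mul_left _ _ h1η]
      _ ≤ a n / P n + ε n := by
          gcongr
          exact div_le_self (hε n) (hP1 _)
  have hb_bdd : BddBelow (Set.range fun n => a n / P n) :=
    ⟨0, by rintro _ ⟨n, rfl⟩; exact div_nonneg (ha n) (hPpos n).le⟩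
  obtain ⟨l, hl⟩ := exists_tendsto_of_le_add_of_summable hb_bdd hε hεs hstep
  obtain ⟨p, hp⟩ := exists_tendsto_prod_range_one_add hη hηs
  exact ⟨l * p, (hl.mul hp).congr fun n => div_mul_cancel₀ _ (hPpos n).ne'⟩

theorem stmt14_general
    {H : Type*} [NormedAddCommGroup H] [InnerProductSpace ℝ H]
    (α : ℝ) (hα : 0 < α)
    (W : ℕ → (H →L[ℝ] H))
    (hWα : ∀ n, ∀ x : H, α * ‖x‖ ^ 2 ≤ ⟪W n x, x⟫)
    (C : Set H) (hC : C.Nonempty)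
    (x : ℕ → H)
    (η : ℕ → ℝ) (hη : ∀ n, 0 ≤ η n) (hηs : Summable η)
    (hFejer : ∀ z ∈ C, ∃ ε : ℕ → ℝ, (∀ n, 0 ≤ ε n) ∧ Summable ε ∧
      ∀ n, ⟪W (n + 1) (x (n + 1) - z), x (n + 1) - z⟫ ≤
        (1 + η n) * ⟪W n (x n - z), x n - z⟫ + ε n) :
    (∀ z ∈ C, ∃ l : ℝ,
        Tendsto (fun n => Real.sqrt ⟪W n (x n - z), x n - z⟫) atTop (nhds l)) ∧
    (∃ M : ℝ, ∀ n, ‖x n‖ ≤ M) := by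
  have hconv : ∀ z ∈ C, ∃ l, Tendsto (fun n => ⟪W n (x n - z), x n - z⟫) atTop (𝓝 l) := by
    intro z hz
    obtain ⟨ε, hε, hεs, hrec⟩ := hFejer z hz
    exact exists_tendsto_of_le_one_add_mul_add
      (fun n => (by positivity : (0 : ℝ) ≤ α * _).trans (hWα n _)) hη hηs hε hεs hrec
  refine ⟨fun z hz => ?_, ?_⟩
  · obtain ⟨l, hl⟩ := hconv z hz
    exact ⟨Real.sqrt l, hl.sqrt⟩
  obtain ⟨z, hz⟩ := hC
  obtain ⟨l, hl⟩ := hconv z hz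
  obtain ⟨B, hB⟩ := hl.bddAbove_range
  refine ⟨‖z‖ + Real.sqrt (B / α), fun n => ?_⟩
  have hsq : α * ‖x n - z‖ ^ 2 ≤ B := (hWα n _).trans (hB ⟨n, rfl⟩)
  have hdist : ‖x n - z‖ ≤ Real.sqrt (B / α) := by
    simpa using Real.abs_le_sqrt ((le_div_iff₀' hα).2 hsq)
  linarith [norm_le_norm_add_norm_sub' (x n) z]

/-- Quasi-Fejér monotonicity with φ(t)=t² relative to variable metrics:
the sequence (‖xₙ − z‖_{Wₙ}) converges for each z ∈ C, and (xₙ) is bounded. -/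
theorem stmt14
    {H : Type*} [NormedAddCommGroup H] [InnerProductSpace ℝ H] [CompleteSpace H]
    (α : ℝ) (hα : 0 < α)
    (W : ℕ → (H →L[ℝ] H)) (hW : ∀ n, IsSelfAdjoint (W n))
    (hWα : ∀ n, ∀ x : H, α * ‖x‖ ^ 2 ≤ ⟪W n x, x⟫)
    (hWb : ∃ μ : ℝ, ∀ n, ‖W n‖ ≤ μ)
    (C : Set H) (hC : C.Nonempty)
    (x : ℕ → H)
    (η : ℕ → ℝ) (hη : ∀ n, 0 ≤ η n) (hηs : Summable η)
    (hFejer : ∀ z ∈ C, ∃ ε : ℕ → ℝ, (∀ n, 0 ≤ ε n) ∧ Summable ε ∧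
      ∀ n, ⟪W (n + 1) (x (n + 1) - z), x (n + 1) - z⟫ ≤
        (1 + η n) * ⟪W n (x n - z), x n - z⟫ + ε n) :
    (∀ z ∈ C, ∃ l : ℝ,
        Tendsto (fun n => Real.sqrt ⟪W n (x n - z), x n - z⟫) atTop (nhds l)) ∧
    (∃ M : ℝ, ∀ n, ‖x n‖ ≤ M) :=
  stmt14_general α hα W hWα C hC x η hη hηs hFejer
end

section
/- Let H be a real Hilbert space, let B: H → H be monotone and β-Lipschitz, let μ ≥ α > 0, let U be a bounded self-adjoint operator with μ·Id ⪰ U ⪰ α·Id, and let γ ∈ (0, 1/(βμ)]. Then for all p, p̃ ∈ H, ‖γU(B(p̃) − B(p))‖_{U⁻¹} ≤ ‖p̃ − p‖_{U⁻¹}, where ‖z‖²_{U⁻¹} = ⟨z, U⁻¹z⟩. -/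
/-!
With `w = B p̃ - B p`, `z = p̃ - p` and `U' = U⁻¹`, the left side squared is `γ² ⟪U w, w⟫`, which is
at most `γ² μ β² ‖z‖² ≤ ‖z‖² / μ` by the upper bound on `U`, the Lipschitz bound and `γ β μ ≤ 1`.
The right side squared is at least `‖z‖² / μ`: for `0 ≤ U ≤ μ` one has `‖U x‖² ≤ μ ⟪U x, x⟫`,
applied at `x = U⁻¹ z`.
-/

open scoped RealInnerProductSpace

namespace ContinuousLinearMap

variable {H : Type*} [NormedAddCommGroup H] [InnerProductSpace ℝ H]

theorem IsPositive.norm_apply_sq_le {T : H →L[ℝ] H} (hT : T.IsPositive) {μ : ℝ} (hμ : 0 < μ)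
    (hTμ : ∀ x, ⟪T x, x⟫ ≤ μ * ‖x‖ ^ 2) (x : H) : ‖T x‖ ^ 2 ≤ μ * ⟪T x, x⟫ := by
  -- positivity of `T` at `x - μ⁻¹ T x`, with the upper bound used on the quadratic term
  have hpos := hT.inner_nonneg_left (x - μ⁻¹ • T x)
  have hexpand : ⟪T (x - μ⁻¹ • T x), x - μ⁻¹ • T x⟫ =
      ⟪T x, x⟫ - 2 * μ⁻¹ * ‖T x‖ ^ 2 + μ⁻¹ ^ 2 * ⟪T (T x), T x⟫ := by
    simp only [map_sub, map_smul, inner_sub_left, inner_sub_right, real_inner_smul_left,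
      real_inner_smul_right, real_inner_self_eq_norm_sq, hT.inner_left_eq_inner_right (T x) x]
    ring
  have hquad : μ⁻¹ ^ 2 * ⟪T (T x), T x⟫ ≤ μ⁻¹ * ‖T x‖ ^ 2 := by
    calc μ⁻¹ ^ 2 * ⟪T (T x), T x⟫ ≤ μ⁻¹ ^ 2 * (μ * ‖T x‖ ^ 2) := by gcongr; exact hTμ (T x)
      _ = μ⁻¹ * ‖T x‖ ^ 2 := by field_simp
  rw [← inv_mul_le_iff₀ hμ]
  linarith

theorem IsPositive.norm_sq_le_inner_apply_of_rightInverse {T T' : H →L[ℝ] H} (hT : T.IsPositive)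
    {μ : ℝ} (hμ : 0 < μ) (hTμ : ∀ x, ⟪T x, x⟫ ≤ μ * ‖x‖ ^ 2) (hTT' : ∀ z, T (T' z) = z)
    (z : H) : ‖z‖ ^ 2 ≤ μ * ⟪z, T' z⟫ := by
  simpa only [hTT'] using hT.norm_apply_sq_le hμ hTμ (T' z)

end ContinuousLinearMap

theorem stmt15_general
    {H : Type*} [NormedAddCommGroup H] [InnerProductSpace ℝ H] [CompleteSpace H]
    (α μ β γ : ℝ) (hα : 0 < α) (hαμ : α ≤ μ)
    (hγ0 : 0 < γ) (hγ : γ ≤ 1 / (β * μ))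
    (B : H → H)
    (hBlip : ∀ x y : H, ‖B x - B y‖ ≤ β * ‖x - y‖)
    (U U' : H →L[ℝ] H) (hU : IsSelfAdjoint U)
    (hU' : ∀ x, U (U' x) = x ∧ U' (U x) = x)
    (hUα : ∀ x : H, α * ‖x‖ ^ 2 ≤ ⟪U x, x⟫)
    (hUμ : ∀ x : H, ⟪U x, x⟫ ≤ μ * ‖x‖ ^ 2) :
    ∀ p p' : H,
      Real.sqrt ⟪γ • U (B p' - B p), U' (γ • U (B p' - B p))⟫ ≤
        Real.sqrt ⟪p' - p, U' (p' - p)⟫ := by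
  intro p p'
  set w := B p' - B p
  set z := p' - p
  have hμ : 0 < μ := hα.trans_le hαμ
  have hUpos : U.IsPositive :=
    (U.isPositive_iff').mpr ⟨hU, fun x ↦ (by positivity : 0 ≤ α * ‖x‖ ^ 2).trans (hUα x)⟩
  have hβμ : 0 < β * μ := one_div_pos.mp (hγ0.trans_le hγ)
  have hγβμ : γ * (β * μ) ≤ 1 := (le_div_iff₀ hβμ).mp hγ
  have hlhs : ⟪γ • U w, U' (γ • U w)⟫ = γ ^ 2 * ⟪U w, w⟫ := by
    rw [map_smul, real_inner_smul_left, real_inner_smul_right, (hU' w).2]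
    ring
  refine Real.sqrt_le_sqrt (le_of_mul_le_mul_left ?_ hμ)
  calc μ * ⟪γ • U w, U' (γ • U w)⟫ = γ ^ 2 * μ * ⟪U w, w⟫ := by rw [hlhs]; ring
    _ ≤ γ ^ 2 * μ * (μ * ‖w‖ ^ 2) := by gcongr; exact hUμ w
    _ = (γ * μ) ^ 2 * ‖w‖ ^ 2 := by ring
    _ ≤ (γ * μ) ^ 2 * (β * ‖z‖) ^ 2 := by gcongr; exact hBlip p' p
    _ = (γ * (β * μ)) ^ 2 * ‖z‖ ^ 2 := by ring
    _ ≤ ‖z‖ ^ 2 := mul_le_of_le_one_left (sq_nonneg _) (pow_le_one₀ (by positivity) hγβμ)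
    _ ≤ μ * ⟪z, U' z⟫ :=
      hUpos.norm_sq_le_inner_apply_of_rightInverse hμ hUμ (fun x ↦ (hU' x).1) z

/-- If B is monotone β-Lipschitz, μ·Id ⪰ U ⪰ α·Id and γ ≤ 1/(βμ), then
‖γU(B(p̃) − B(p))‖_{U⁻¹} ≤ ‖p̃ − p‖_{U⁻¹}. -/
theorem stmt15
    {H : Type*} [NormedAddCommGroup H] [InnerProductSpace ℝ H] [CompleteSpace H]
    (α μ β γ : ℝ) (hα : 0 < α) (hαμ : α ≤ μ) (hβ : 0 < β)
    (hγ0 : 0 < γ) (hγ : γ ≤ 1 / (β * μ))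
    (B : H → H)
    (hBmono : ∀ x y : H, 0 ≤ ⟪B x - B y, x - y⟫)
    (hBlip : ∀ x y : H, ‖B x - B y‖ ≤ β * ‖x - y‖)
    (U U' : H →L[ℝ] H) (hU : IsSelfAdjoint U)
    (hU' : ∀ x, U (U' x) = x ∧ U' (U x) = x)
    (hUα : ∀ x : H, α * ‖x‖ ^ 2 ≤ ⟪U x, x⟫)
    (hUμ : ∀ x : H, ⟪U x, x⟫ ≤ μ * ‖x‖ ^ 2) :
    ∀ p p' : H,
      Real.sqrt ⟪γ • U (B p' - B p), U' (γ • U (B p' - B p))⟫ ≤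
        Real.sqrt ⟪p' - p, U' (p' - p)⟫ :=
  stmt15_general α μ β γ hα hαμ hγ0 hγ B hBlip U U' hU hU' hUα hUμ
end
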